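/- arXiv:1212.5738 — 7 statements merged into one kernel-verified Lean document; each statement's English description precedes it below -/
import Mathlib

section
/- Let r ≥ 2 be an integer, let G be an abelian group in which r·g = 0 for every g ∈ G (torsion r), let K ≥ 1 be a real number, and let A be a nonempty finite subset of G. If |A + A| ≤ K·|A|, then the affine span of A is finite and satisfies |⟨A⟩| ≤ K²·r^(K⁴)·|A|. -/
/-!
Ruzsa's argument. By Plünnecke–Ruzsa, `|3A - A| ≤ K⁴|A|`, so Ruzsa's covering lemma yields a set
`F` of at most `K⁴` elements with `2A - A ⊆ F + (A - A)`. For the subgroup `T` generated by `F`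
this inclusion makes `T + (A - A)` closed under addition, hence a subgroup, and a translate of it
contains `A`, hence `⟨A⟩`. Exponent `r` gives `|T| ≤ r^|F| ≤ r^(K⁴)` (`T` is the `ZMod r`-span
of `F`), while `|A - A| ≤ K²|A|` is Plünnecke–Ruzsa again.
-/

open Pointwise

/-- The affine span of `A`: the smallest coset of a subgroup containing `A`,
realized as the intersection of all such cosets. -/
def affSpan {G : Type*} [AddCommGroup G] (A : Set G) : Set G :=
  ⋂₀ {C : Set G | A ⊆ C ∧ ∃ (H : AddSubgroup G) (g : G), C = g +ᵥ (H : Set G)}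

open Finset

namespace Submodule

variable {R M : Type*} [Semiring R] [AddCommMonoid M] [Module R M]

theorem range_fintypeLinearCombination_coe (F : Finset M) :
    Set.range (Fintype.linearCombination R ((↑) : F → M)) = span R (F : Set M) := by
  rw [← LinearMap.coe_range, Fintype.range_linearCombination, Subtype.range_coe]

theorem finite_span_finset [Finite R] (F : Finset M) : Finite (span R (F : Set M)) := by
  rw [← SetLike.coe_sort_coe, ← range_fintypeLinearCombination_coe]
  exact Set.finite_range _ |>.to_subtype

theorem natCard_span_finset_le [Finite R] (F : Finset M) :
    Nat.card (span R (F : Set M)) ≤ Nat.card R ^ #F := by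
  rw [← SetLike.coe_sort_coe, ← range_fintypeLinearCombination_coe]
  exact (Finite.card_range_le _).trans_eq (by simp [Nat.card_fun])

end Submodule

section

variable {G : Type*} [AddCommGroup G]

namespace AddSubgroup

theorem exists_finite_superset_natCard_le {r : ℕ} [NeZero r]
    (htor : ∀ g : G, r • g = 0) (F : Finset G) :
    ∃ T : AddSubgroup G, (F : Set G) ⊆ T ∧ Finite T ∧ Nat.card T ≤ r ^ #F := by
  let : Module (ZMod r) G := AddCommGroup.zmodModule htor
  refine ⟨(Submodule.span (ZMod r) (F : Set G)).toAddSubgroup, Submodule.subset_span,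
    Submodule.finite_span_finset F, ?_⟩
  simpa using Submodule.natCard_span_finset_le (R := ZMod r) F

theorem sub_self_add_sub_self_subset {T : AddSubgroup G} {A : Set G}
    (hcov : A + A - A ⊆ T + (A - A)) : A - A + (A - A) ⊆ T + (A - A) := by
  rintro _ ⟨_, ⟨a, ha, b, hb, rfl⟩, _, ⟨c, hc, e, he, rfl⟩, rfl⟩
  obtain ⟨t, ht, _, ⟨u, hu, v, hv, rfl⟩, htuv⟩ :=
    hcov (Set.sub_mem_sub (Set.add_mem_add ha hc) hb)
  obtain ⟨t', ht', _, ⟨p, hp, q, hq, rfl⟩, htpq⟩ :=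
    hcov (Set.sub_mem_sub (Set.add_mem_add hv he) hu)
  -- `a + c - b = t + (u - v)` and `v + e - u = t' + (p - q)`,
  -- so `(a - b) + (c - e) = (t - t') + (q - p)`
  refine ⟨t - t', T.sub_mem ht ht', q - p, Set.sub_mem_sub hq hp, ?_⟩
  obtain rfl := eq_sub_of_add_eq htuv
  obtain rfl := eq_sub_of_add_eq htpq
  beta_reduce
  abel

def addSubSelf (T : AddSubgroup G) (A : Set G) (hA : A.Nonempty)
    (hcov : A + A - A ⊆ T + (A - A)) : AddSubgroup G where
  carrier := T + (A - A)
  zero_mem' := by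
    obtain ⟨a, ha⟩ := hA
    exact ⟨0, T.zero_mem, a - a, Set.sub_mem_sub ha ha, by simp⟩
  add_mem' := by
    rintro _ _ ⟨t₁, ht₁, d₁, hd₁, rfl⟩ ⟨t₂, ht₂, d₂, hd₂, rfl⟩
    obtain ⟨t, ht, d, hd, hsum⟩ := sub_self_add_sub_self_subset hcov (Set.add_mem_add hd₁ hd₂)
    refine ⟨t₁ + t₂ + t, add_mem (add_mem ht₁ ht₂) ht, d, hd, ?_⟩
    beta_reduce at hsum ⊢
    rw [add_assoc, hsum]
    abel
  neg_mem' := by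
    rintro _ ⟨t, ht, _, ⟨a, ha, b, hb, rfl⟩, rfl⟩
    refine ⟨-t, T.neg_mem ht, b - a, Set.sub_mem_sub hb ha, ?_⟩
    beta_reduce
    abel

theorem sub_self_subset_addSubSelf (T : AddSubgroup G) {A : Set G} (hA : A.Nonempty)
    (hcov : A + A - A ⊆ T + (A - A)) : A - A ⊆ T.addSubSelf A hA hcov :=
  fun x hx => ⟨0, T.zero_mem, x, hx, zero_add x⟩

end AddSubgroup

theorem affSpan_subset_vadd {A : Set G} {H : AddSubgroup G} {a : G} (ha : a ∈ A)
    (hH : A - A ⊆ H) : affSpan A ⊆ a +ᵥ (H : Set G) :=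
  Set.sInter_subset_of_mem
    ⟨fun x hx => ⟨x - a, hH (Set.sub_mem_sub hx ha), by simp⟩, H, a, rfl⟩

namespace Finset

variable [DecidableEq G] {B : Finset G} {K : ℝ}

theorem card_nsmul_sub_nsmul_le (hB : B.Nonempty) (hK : (#(B + B) : ℝ) ≤ K * #B) (m n : ℕ) :
    (#(m • B - n • B) : ℝ) ≤ K ^ (m + n) * #B := by
  have hpos : (0 : ℝ) < #B := by exact_mod_cast hB.card_pos
  have hPR := (NNRat.cast_le (K := ℝ)).2 (pluennecke_ruzsa_inequality_nsmul_sub_nsmul_add hB B m n)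
  push_cast at hPR
  refine hPR.trans ?_
  gcongr
  rwa [div_le_iff₀ hpos]

theorem exists_card_le_add_sub_subset_add_sub (hB : B.Nonempty)
    (hK : (#(B + B) : ℝ) ≤ K * #B) :
    ∃ F : Finset G, (#F : ℝ) ≤ K ^ 4 ∧ B + B - B ⊆ F + (B - B) := by
  have h31 := card_nsmul_sub_nsmul_le hB hK 3 1
  rw [succ_nsmul, two_nsmul, one_nsmul, ← sub_add_eq_add_sub] at h31
  obtain ⟨F, -, hF, hcov⟩ := ruzsa_covering_add hB h31
  exact ⟨F, hF, hcov⟩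

theorem exists_addSubgroup_sub_subset_natCard_le {r : ℕ} [NeZero r] (htor : ∀ g : G, r • g = 0)
    (hB : B.Nonempty) (hK : (#(B + B) : ℝ) ≤ K * #B) :
    ∃ H : AddSubgroup G, (B : Set G) - B ⊆ H ∧ Finite H ∧
      (Nat.card H : ℝ) ≤ K ^ 2 * r ^ (K ^ 4) * #B := by
  obtain ⟨F, hFcard, hcov⟩ := exists_card_le_add_sub_subset_add_sub hB hK
  obtain ⟨T, hFT, hTfin, hTcard⟩ := AddSubgroup.exists_finite_superset_natCard_le htor F
  have hcovT : (B : Set G) + B - B ⊆ T + (B - B) := by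
    refine subset_trans ?_ (Set.add_subset_add_right hFT)
    simpa only [coe_add, coe_sub] using coe_subset.2 hcov
  have hTr : (Nat.card T : ℝ) ≤ r ^ (K ^ 4) :=
    calc (Nat.card T : ℝ) ≤ (r : ℝ) ^ (#F : ℝ) := by rw [Real.rpow_natCast]; exact_mod_cast hTcard
      _ ≤ r ^ (K ^ 4) := Real.rpow_le_rpow_of_exponent_le (mod_cast NeZero.one_le) hFcard
  have hBB : (#(B - B) : ℝ) ≤ K ^ 2 * #B := by
    simpa using card_nsmul_sub_nsmul_le hB hK 1 1
  let H := T.addSubSelf B hB.to_set hcovT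
  have hHcard : Nat.card H ≤ Nat.card T * #(B - B) := by
    rw [← Set.ncard_coe_finset, ← Nat.card_coe_set_eq, coe_sub]
    exact Set.natCard_add_le
  refine ⟨H, T.sub_self_subset_addSubSelf hB.to_set hcovT,
    ((Set.toFinite (T : Set G)).add (B.finite_toSet.sub B.finite_toSet)).to_subtype, ?_⟩
  calc (Nat.card H : ℝ) ≤ Nat.card T * #(B - B) := by exact_mod_cast hHcard
    _ ≤ r ^ (K ^ 4) * (K ^ 2 * #B) := by gcongr
    _ = K ^ 2 * r ^ (K ^ 4) * #B := by ring

end Finset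

end

theorem statement1_general {G : Type*} [AddCommGroup G] (r : ℕ) (hr : 2 ≤ r)
    (htor : ∀ g : G, r • g = 0) (K : ℝ)
    (A : Set G) (hfin : A.Finite) (hne : A.Nonempty)
    (hdouble : ((A + A).ncard : ℝ) ≤ K * A.ncard) :
    (affSpan A).Finite ∧
      ((affSpan A).ncard : ℝ) ≤ K ^ 2 * (r : ℝ) ^ (K ^ 4) * A.ncard := by
  classical
  have : NeZero r := ⟨by omega⟩
  obtain ⟨B, rfl⟩ := hfin.exists_finset_coe
  obtain ⟨a, ha⟩ := hne
  have hK : (#(B + B) : ℝ) ≤ K * #B := by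
    simpa only [← coe_add, Set.ncard_coe_finset] using hdouble
  obtain ⟨H, hBH, hHfin, hHcard⟩ := exists_addSubgroup_sub_subset_natCard_le htor ⟨a, ha⟩ hK
  have hspan := affSpan_subset_vadd ha hBH
  have hcoset : (a +ᵥ (H : Set G)).Finite := (Set.toFinite (H : Set G)).vadd_set
  refine ⟨hcoset.subset hspan, ?_⟩
  rw [Set.ncard_coe_finset]
  refine le_trans ?_ hHcard
  exact_mod_cast (Set.ncard_le_ncard hspan hcoset).trans_eq (Set.ncard_vadd_set _ _)

theorem statement1 {G : Type*} [AddCommGroup G] (r : ℕ) (hr : 2 ≤ r)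
    (htor : ∀ g : G, r • g = 0) (K : ℝ) (hK : 1 ≤ K)
    (A : Set G) (hfin : A.Finite) (hne : A.Nonempty)
    (hdouble : ((A + A).ncard : ℝ) ≤ K * A.ncard) :
    (affSpan A).Finite ∧
      ((affSpan A).ncard : ℝ) ≤ K ^ 2 * (r : ℝ) ^ (K ^ 4) * A.ncard :=
  statement1_general r hr htor K A hfin hne hdouble
end

section
/- Let r ≥ 3 and m ≥ 1 be integers, and let A = {0, e₁, e₂, …, e_m} ⊆ (ZMod r)^m, where e₁, …, e_m is the standard basis. Then |A| = m + 1, |A + A| = (m+1)(m+2)/2 (so the doubling constant of A equals (m+2)/2), and the affine span of A is all of (ZMod r)^m, which has size r^m. -/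
/-!
Index `A` by `Option (Fin m)`, sending `none` to `0` and `some i` to `eᵢ`. The `k`-th coordinate
of a sum of `n` elements of `A` counts how often `e_k` occurs in it; for `n < r` this count
survives reduction mod `r`, and the number of zero summands is then determined by `n`. Hence sums
of `n` elements of `A` correspond bijectively to `n`-multisets on `m + 1` letters, of which there
are `(m + 1)(m + 2)/2` for `n = 2`. As for the span: a coset containing `0` is a subgroup, and the
`eᵢ` generate the whole group.
-/

open Pointwise

variable {ι R : Type*}

theorem Multiset.eq_of_card_eq_of_count_some_eq [Fintype ι] [DecidableEq ι]
    {s t : Multiset (Option ι)} (hcard : card s = card t)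
    (hsome : ∀ k, s.count (some k) = t.count (some k)) : s = t := by
  have hsum (u : Multiset (Option ι)) : u.count none + ∑ k, u.count (some k) = card u := by
    rw [← Fintype.sum_option (fun o => u.count o)]
    exact Multiset.sum_count_eq_card fun _ _ => Finset.mem_univ _
  ext (_ | k)
  · have hs := hsum s
    have ht := hsum t
    simp only [hsome] at hs
    omega
  · exact hsome k

def optionSingle [Zero R] [One R] [DecidableEq ι] (o : Option ι) : ι → R :=
  o.elim 0 fun i => Pi.single i 1

theorem range_optionSingle [Zero R] [One R] [DecidableEq ι] :
    Set.range (optionSingle : Option ι → ι → R) =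
      {0} ∪ Set.range fun i => Pi.single i 1 := by
  rw [Option.range_eq, Set.insert_eq]
  rfl

theorem optionSingle_injective [MulZeroOneClass R] [Nontrivial R] [DecidableEq ι] :
    Function.Injective (optionSingle : Option ι → ι → R) := by
  rintro (_ | i) (_ | j) h
  · rfl
  · exact absurd h.symm (by simp [optionSingle])
  · exact absurd h (by simp [optionSingle])
  · simpa [optionSingle, Pi.single_apply] using congrFun h i

theorem sum_map_optionSingle_apply [AddCommMonoidWithOne R] [DecidableEq ι]
    (s : Multiset (Option ι)) (k : ι) :
    (s.map optionSingle).sum k = (s.count (some k) : R) := by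
  induction s using Multiset.induction_on with
  | empty => simp
  | cons o s ih =>
    rcases o with _ | i
    · simp [optionSingle, ih]
    · rcases eq_or_ne i k with rfl | h
      · simp [optionSingle, ih, add_comm]
      · simp [optionSingle, ih, Ne.symm h]

theorem sum_map_optionSingle_injective [Fintype ι] [DecidableEq ι] {n r : ℕ} (hn : n < r) :
    Function.Injective fun s : Sym (Option ι) n =>
      (((s : Multiset (Option ι)).map optionSingle).sum : ι → ZMod r) := by
  intro s t hst
  have hcount (u : Sym (Option ι) n) (k : ι) : (u : Multiset _).count (some k) < r :=
    ((Multiset.count_le_card _ _).trans_eq u.2).trans_lt hn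
  refine Sym.coe_injective <|
    Multiset.eq_of_card_eq_of_count_some_eq (s.2.trans t.2.symm) fun k => ?_
  have := congrArg ZMod.val (congrFun hst k)
  simp only [sum_map_optionSingle_apply] at this
  rwa [ZMod.val_cast_of_lt (hcount s k), ZMod.val_cast_of_lt (hcount t k)] at this

theorem range_optionSingle_add_self [AddCommMonoidWithOne R] [DecidableEq ι] :
    Set.range (optionSingle : Option ι → ι → R) + Set.range optionSingle =
      Set.range fun s : Sym (Option ι) 2 => ((s : Multiset (Option ι)).map optionSingle).sum := by
  ext x
  simp only [Set.mem_add, Set.mem_range]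
  constructor
  · rintro ⟨_, ⟨a, rfl⟩, _, ⟨b, rfl⟩, rfl⟩
    exact ⟨a ::ₛ b ::ₛ .nil, by simp [Sym.coe_cons, Sym.coe_nil]⟩
  · rintro ⟨s, rfl⟩
    obtain ⟨a, t, rfl⟩ := s.exists_eq_cons_of_succ
    obtain ⟨b, u, rfl⟩ := t.exists_eq_cons_of_succ
    rw [u.eq_nil_of_card_zero]
    exact ⟨_, ⟨a, rfl⟩, _, ⟨b, rfl⟩, by simp [Sym.coe_cons, Sym.coe_nil]⟩

theorem closure_range_single_one_eq_top [Finite ι] [DecidableEq ι] (r : ℕ) :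
    AddSubgroup.closure (Set.range fun i : ι => Pi.single i (1 : ZMod r)) = ⊤ := by
  refine eq_top_iff.mpr fun x _ => ?_
  have hspan := (Pi.basisFun (ZMod r) ι).span_eq
  rw [show ⇑(Pi.basisFun (ZMod r) ι) = _ from funext (Pi.basisFun_apply _ _)] at hspan
  have : Submodule.span (ZMod r) (Set.range fun i : ι => Pi.single i (1 : ZMod r)) ≤
      AddSubgroup.toZModSubmodule r (AddSubgroup.closure _) :=
    Submodule.span_le.mpr AddSubgroup.subset_closure
  exact (hspan ▸ this) trivial

theorem affSpan_eq_univ_of_zero_mem {G : Type*} [AddCommGroup G] {A : Set G} (h0 : 0 ∈ A)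
    (hA : AddSubgroup.closure A = ⊤) : affSpan A = Set.univ := by
  refine Set.eq_univ_of_univ_subset (Set.subset_sInter ?_)
  rintro C ⟨hAC, H, g, rfl⟩
  obtain ⟨h, hh, hgh⟩ := hAC h0
  have hg : g ∈ H := by
    rw [eq_neg_of_add_eq_zero_left hgh]
    exact H.neg_mem hh
  rw [leftAddCoset_mem_leftAddCoset H hg] at hAC ⊢
  rw [← AddSubgroup.coe_top, SetLike.coe_subset_coe, ← hA, AddSubgroup.closure_le]
  exact hAC

theorem statement2_general (r m : ℕ) (hr : 3 ≤ r)
    (A : Set (Fin m → ZMod r))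
    (hA : A = {0} ∪ Set.range (fun i : Fin m => Pi.single i (1 : ZMod r))) :
    A.ncard = m + 1 ∧
    (A + A).ncard = (m + 1) * (m + 2) / 2 ∧
    affSpan A = Set.univ ∧
    (affSpan A).ncard = r ^ m := by
  have : Fact (1 < r) := ⟨by omega⟩
  have hspan : affSpan A = Set.univ := by
    refine affSpan_eq_univ_of_zero_mem (hA ▸ Or.inl rfl) (top_le_iff.mp ?_)
    rw [← closure_range_single_one_eq_top r, hA]
    exact AddSubgroup.closure_mono Set.subset_union_right
  rw [← range_optionSingle] at hA
  subst hA
  refine ⟨?_, ?_, hspan, ?_⟩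
  · rw [Set.ncard_range_of_injective optionSingle_injective]
    simp
  · rw [range_optionSingle_add_self,
      Set.ncard_range_of_injective (sum_map_optionSingle_injective (by omega)),
      Nat.card_eq_fintype_card, Sym.card_sym_eq_choose, Nat.choose_two_right]
    simp [mul_comm]
  · rw [hspan, Set.ncard_univ, Nat.card_fun, Nat.card_zmod, Nat.card_eq_fintype_card,
      Fintype.card_fin]

theorem statement2 (r m : ℕ) (hr : 3 ≤ r) (hm : 1 ≤ m)
    (A : Set (Fin m → ZMod r))
    (hA : A = {0} ∪ Set.range (fun i : Fin m => Pi.single i (1 : ZMod r))) :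
    A.ncard = m + 1 ∧
    (A + A).ncard = (m + 1) * (m + 2) / 2 ∧
    affSpan A = Set.univ ∧
    (affSpan A).ncard = r ^ m :=
  statement2_general r m hr A hA
end

section
/- Let p be a prime, n ≥ 1, and let v ∈ (ZMod p)^n be nonzero. Let i be the largest coordinate with v_i ≠ 0 and assume v_i = 1. Then for all u, w ∈ (ZMod p)^n and all integers c, d with 1 ≤ c, d ≤ p, one has IS(c, L_v^u) + IS(d, L_v^w) = IS(min(c + d − 1, p), L_v^{u+w}). -/
open Pointwise

/-- `u ≺ v` in the lexicographic order: `u i < v i` (as values in `{0,…,p-1}`)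
at the largest coordinate `i` where `u` and `v` differ. -/
def lexLt {n p : ℕ} (u v : Fin n → ZMod p) : Prop :=
  ∃ i : Fin n, (u i).val < (v i).val ∧ ∀ j : Fin n, i < j → u j = v j

/-- The `v`-line through `u`: `L_v^u = {u + k•v : k ∈ ZMod p}`. -/
def line {n p : ℕ} (v u : Fin n → ZMod p) : Set (Fin n → ZMod p) :=
  {x | ∃ k : ZMod p, x = u + k • v}

/-- `IS k L`: the set of the `k` lexicographically smallest elements of `L`. -/
def IS {n p : ℕ} (k : ℕ) (L : Set (Fin n → ZMod p)) : Set (Fin n → ZMod p) :=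
  {x | x ∈ L ∧ ({y | y ∈ L ∧ lexLt y x}).ncard < k}

/-- The `v`-compression of `A`: on each `v`-line `L`, replace `A ∩ L` by the
initial segment of `L` of the same cardinality. -/
def comp {n p : ℕ} (v : Fin n → ZMod p) (A : Set (Fin n → ZMod p)) :
    Set (Fin n → ZMod p) :=
  ⋃ u : Fin n → ZMod p, IS (A ∩ line v u).ncard (line v u)

/-- `E = {0, e₁, …, e_n}`: zero together with the standard basis. -/
def stdE (n p : ℕ) : Set (Fin n → ZMod p) :=
  {0} ∪ Set.range (fun i : Fin n => Pi.single i (1 : ZMod p))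

/-- `A` is `𝓔`-compressed: `E ⊆ A` and `A` is `v`-compressed for every nonzero `v`
whose compression keeps `E` inside the set. -/
def ECompressed {n p : ℕ} (A : Set (Fin n → ZMod p)) : Prop :=
  stdE n p ⊆ A ∧
    ∀ v : Fin n → ZMod p, v ≠ 0 → stdE n p ⊆ comp v A → comp v A = A

/-! Since `v i = 1` and `v` vanishes above `i`, the lexicographic order on a `v`-line is the
order of the `i`-th coordinates, so `IS c (line v u)` is the progression `b u + t • v`,
`t.val < c`, based at the point `b u = u - u i • v` of the line with `i`-th coordinate `0`.
As `b (u + w) = b u + b w`, the claim reduces to the interval sumset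
`{0, …, c - 1} + {0, …, d - 1} = {0, …, min (c + d - 2) (p - 1)}` in `ZMod p`. -/

lemma add_smul_injective {ι R : Type*} [Ring R] {v : ι → R} {i : ι} (hvi : v i = 1)
    (u : ι → R) : Function.Injective (fun k : R => u + k • v) := fun k l h => by
  simpa [hvi] using congrFun h i

lemma ZMod.ncard_setOf_val_lt {p m : ℕ} [NeZero p] (hm : m ≤ p) :
    {a : ZMod p | a.val < m}.ncard = m := by
  have hrange : Set.Iio m ⊆ Set.range (ZMod.val : ZMod p → ℕ) := fun j hj =>
    ⟨j, ZMod.val_cast_of_lt (lt_of_lt_of_le hj hm)⟩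
  calc {a : ZMod p | a.val < m}.ncard = (ZMod.val ⁻¹' Set.Iio m).ncard := rfl
    _ = m := by
      rw [Set.ncard_preimage_of_injective_subset_range (ZMod.val_injective p) hrange,
        Set.ncard_Iio_nat]

lemma ZMod.setOf_val_lt_add_setOf_val_lt {p c d : ℕ} [NeZero p] (hc1 : 1 ≤ c) (hd1 : 1 ≤ d) :
    {s : ZMod p | s.val < c} + {t : ZMod p | t.val < d} =
      {r : ZMod p | r.val < min (c + d - 1) p} := by
  ext r
  simp only [Set.mem_add, Set.mem_ofPred_eq]
  constructor
  · rintro ⟨s, hs, t, ht, rfl⟩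
    rw [ZMod.val_add]
    have := Nat.mod_lt (s.val + t.val) (NeZero.pos p)
    have := Nat.mod_le (s.val + t.val) p
    omega
  · intro hr
    have := r.val_lt
    have hs : min r.val (c - 1) < p := by omega
    have ht : r.val - min r.val (c - 1) < p := by omega
    refine ⟨(min r.val (c - 1) : ℕ), ?_, (r.val - min r.val (c - 1) : ℕ), ?_, ?_⟩
    · rw [ZMod.val_cast_of_lt hs]; omega
    · rw [ZMod.val_cast_of_lt ht]; omega
    · rw [← Nat.cast_add, Nat.add_sub_cancel' (min_le_left _ _), ZMod.natCast_val,
        ZMod.cast_id]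

lemma image_add_smul_add_image_add_smul {R M : Type*} [Semiring R] [AddCommMonoid M]
    [Module R M] (a b v : M) (S T : Set R) :
    (fun t => a + t • v) '' S + (fun t => b + t • v) '' T =
      (fun t => a + b + t • v) '' (S + T) := by
  ext x
  simp only [Set.mem_add, Set.mem_image]
  constructor
  · rintro ⟨_, ⟨s, hs, rfl⟩, _, ⟨t, ht, rfl⟩, rfl⟩
    exact ⟨s + t, ⟨s, hs, t, ht, rfl⟩, by rw [add_smul]; abel⟩
  · rintro ⟨_, ⟨s, hs, t, ht, rfl⟩, rfl⟩
    exact ⟨_, ⟨s, hs, rfl⟩, _, ⟨t, ht, rfl⟩, by rw [add_smul]; abel⟩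

section Line

variable {n p : ℕ} {v : Fin n → ZMod p} {i : Fin n}

lemma lexLt_add_smul_iff (hvi : v i = 1) (hitop : ∀ j, i < j → v j = 0)
    (u : Fin n → ZMod p) (k l : ZMod p) :
    lexLt (u + l • v) (u + k • v) ↔ (u i + l).val < (u i + k).val := by
  constructor
  · rintro ⟨j, hlt, heq⟩
    rcases lt_trichotomy j i with hji | rfl | hij
    · have hkl : l = k := by simpa [hvi] using heq i hji
      simp [hkl] at hlt
    · simpa [hvi] using hlt
    · simp [hitop j hij] at hlt
  · intro h
    exact ⟨i, by simpa [hvi] using h, fun j hj => by simp [hitop j hj]⟩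

lemma ncard_lexLt_add_smul [NeZero p] (hvi : v i = 1) (hitop : ∀ j, i < j → v j = 0)
    (u : Fin n → ZMod p) (k : ZMod p) :
    {y | y ∈ line v u ∧ lexLt y (u + k • v)}.ncard = (u i + k).val := by
  have hset : {y | y ∈ line v u ∧ lexLt y (u + k • v)} =
      (fun l => u + l • v) '' ((u i + ·) ⁻¹' {a | a.val < (u i + k).val}) := by
    ext y
    constructor
    · rintro ⟨⟨l, rfl⟩, hlex⟩
      exact ⟨l, (lexLt_add_smul_iff hvi hitop u k l).mp hlex, rfl⟩
    · rintro ⟨l, hl, rfl⟩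
      exact ⟨⟨l, rfl⟩, (lexLt_add_smul_iff hvi hitop u k l).mpr hl⟩
  rw [hset, Set.ncard_image_of_injective _ (add_smul_injective hvi u),
    Set.ncard_preimage_of_injective_subset_range (add_right_injective _)
      fun a _ => ⟨a - u i, add_sub_cancel _ _⟩,
    ZMod.ncard_setOf_val_lt (ZMod.val_lt _).le]

lemma IS_line_eq_image [NeZero p] (hvi : v i = 1) (hitop : ∀ j, i < j → v j = 0)
    (u : Fin n → ZMod p) (c : ℕ) :
    IS c (line v u) = (fun t => (u - u i • v) + t • v) '' {t : ZMod p | t.val < c} := by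
  ext x
  constructor
  · rintro ⟨⟨k, rfl⟩, hrank⟩
    rw [ncard_lexLt_add_smul hvi hitop u k] at hrank
    exact ⟨u i + k, hrank, by module⟩
  · rintro ⟨t, ht, rfl⟩
    have hx : u - u i • v + t • v = u + (t - u i) • v := by module
    refine ⟨⟨t - u i, hx⟩, ?_⟩
    beta_reduce
    rwa [hx, ncard_lexLt_add_smul hvi hitop u, add_sub_cancel]

end Line

theorem statement3_general (p n : ℕ)
    (v : Fin n → ZMod p) (i : Fin n)
    (hvi : v i = 1) (hitop : ∀ j : Fin n, i < j → v j = 0)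
    (u w : Fin n → ZMod p) (c d : ℕ)
    (hc1 : 1 ≤ c) (hcp : c ≤ p) (hd1 : 1 ≤ d) :
    IS c (line v u) + IS d (line v w) = IS (min (c + d - 1) p) (line v (u + w)) := by
  have : NeZero p := ⟨by omega⟩
  have hbase : u + w - (u + w) i • v = (u - u i • v) + (w - w i • v) := by
    rw [Pi.add_apply]; module
  rw [IS_line_eq_image hvi hitop, IS_line_eq_image hvi hitop, IS_line_eq_image hvi hitop,
    image_add_smul_add_image_add_smul, ZMod.setOf_val_lt_add_setOf_val_lt hc1 hd1, hbase]

theorem statement3 (p n : ℕ) (hp : p.Prime) (hn : 1 ≤ n)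
    (v : Fin n → ZMod p) (hv : v ≠ 0) (i : Fin n)
    (hvi : v i = 1) (hitop : ∀ j : Fin n, i < j → v j = 0)
    (u w : Fin n → ZMod p) (c d : ℕ)
    (hc1 : 1 ≤ c) (hcp : c ≤ p) (hd1 : 1 ≤ d) (hdp : d ≤ p) :
    IS c (line v u) + IS d (line v w) = IS (min (c + d - 1) p) (line v (u + w)) :=
  statement3_general p n v i hvi hitop u w c d hc1 hcp hd1
end

section
/- Let p be a prime, n ≥ 1, let A, B ⊆ (ZMod p)^n, and let v ∈ (ZMod p)^n be nonzero. Then C_v(A) + C_v(B) ⊆ C_v(A + B). -/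
open Pointwise

/-!
Let `i` be the last coordinate at which `v` is nonzero. Along a `v`-line the coordinates after `i`
are constant and `z ↦ z i` is a bijection onto `ZMod p`, so the lexicographic order on the line is
the order of `(z i).val`. Hence `x ∈ C_v(A)` exactly when `(x i).val < |A ∩ L_v^x|`. Taking `i`-th
coordinates, `(A ∩ L_v^x) + (B ∩ L_v^y)` lands in `(A + B) ∩ L_v^{x+y}` as the sumset of two subsets
of `ZMod p` of sizes `|A ∩ L_v^x| > (x i).val` and `|B ∩ L_v^y| > (y i).val`, and Cauchy–Davenport
bounds its size below by `min p ((x i).val + (y i).val + 1) > ((x + y) i).val`.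
-/

lemma ZMod.ncard_val_lt {p m : ℕ} [NeZero p] (hm : m ≤ p) :
    {c : ZMod p | c.val < m}.ncard = m := by
  have himage : ZMod.val '' {c : ZMod p | c.val < m} = Set.Iio m := by
    ext k
    refine ⟨fun ⟨c, hc, hck⟩ => hck ▸ hc, fun hk => ⟨k, ?_, ?_⟩⟩
    all_goals have hkp : k < p := lt_of_lt_of_le (Set.mem_Iio.mp hk) hm
    · simpa [ZMod.val_cast_of_lt hkp] using hk
    · simp [ZMod.val_cast_of_lt hkp]
  rw [← (ZMod.val_injective p).injOn.ncard_image, himage, Set.ncard_Iio_nat]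

lemma ZMod.min_le_ncard_add {p : ℕ} (hp : p.Prime) {s t : Set (ZMod p)} (hs : s.Nonempty)
    (ht : t.Nonempty) : min p (s.ncard + t.ncard - 1) ≤ (s + t).ncard := by
  have : NeZero p := ⟨hp.ne_zero⟩
  obtain ⟨S, rfl⟩ := s.toFinite.exists_finset_coe
  obtain ⟨T, rfl⟩ := t.toFinite.exists_finset_coe
  rw [← Finset.coe_add, Set.ncard_coe_finset, Set.ncard_coe_finset, Set.ncard_coe_finset]
  exact ZMod.cauchy_davenport hp (Finset.coe_nonempty.mp hs) (Finset.coe_nonempty.mp ht)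

section Lines

variable {n p : ℕ} {v : Fin n → ZMod p}

lemma mem_line_self (u : Fin n → ZMod p) : u ∈ line v u := ⟨0, by simp⟩

lemma line_eq_of_mem {u x : Fin n → ZMod p} (hx : x ∈ line v u) : line v u = line v x := by
  obtain ⟨k, rfl⟩ := hx
  ext z
  constructor
  · rintro ⟨l, rfl⟩
    exact ⟨l - k, by module⟩
  · rintro ⟨l, rfl⟩
    exact ⟨k + l, by module⟩

lemma add_mem_line_add {x y z w : Fin n → ZMod p} (hz : z ∈ line v x) (hw : w ∈ line v y) :
    z + w ∈ line v (x + y) := by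
  obtain ⟨k, rfl⟩ := hz
  obtain ⟨l, rfl⟩ := hw
  exact ⟨k + l, by module⟩

lemma inter_line_add_inter_line_subset (A B : Set (Fin n → ZMod p)) (x y : Fin n → ZMod p) :
    (A ∩ line v x) + (B ∩ line v y) ⊆ (A + B) ∩ line v (x + y) := by
  rintro _ ⟨z, ⟨hzA, hz⟩, w, ⟨hwB, hw⟩, rfl⟩
  exact ⟨Set.add_mem_add hzA hwB, add_mem_line_add hz hw⟩

lemma apply_eq_of_mem_line {u z w : Fin n → ZMod p} {j : Fin n} (hvj : v j = 0)
    (hz : z ∈ line v u) (hw : w ∈ line v u) : z j = w j := by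
  obtain ⟨k, rfl⟩ := hz
  obtain ⟨l, rfl⟩ := hw
  simp [hvj]

variable [Fact p.Prime] {i : Fin n} (hvi : v i ≠ 0)
include hvi

lemma injOn_apply_line (u : Fin n → ZMod p) : Set.InjOn (fun z => z i) (line v u) := by
  rintro _ ⟨k, rfl⟩ _ ⟨l, rfl⟩ h
  simp only [Pi.add_apply, Pi.smul_apply, smul_eq_mul, add_right_inj] at h
  rw [mul_right_cancel₀ hvi h]

lemma image_apply_line (u : Fin n → ZMod p) : (fun z => z i) '' line v u = Set.univ := by
  refine Set.eq_univ_of_forall fun c => ⟨u + ((c - u i) / v i) • v, ⟨_, rfl⟩, ?_⟩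
  simp [div_mul_cancel₀ _ hvi]

lemma ncard_image_apply_inter_line (A : Set (Fin n → ZMod p)) (x : Fin n → ZMod p) :
    ((fun z => z i) '' (A ∩ line v x)).ncard = (A ∩ line v x).ncard :=
  ((injOn_apply_line hvi x).mono Set.inter_subset_right).ncard_image

lemma min_le_ncard_add_inter_line {A B : Set (Fin n → ZMod p)} {x y : Fin n → ZMod p}
    (hA : (A ∩ line v x).Nonempty) (hB : (B ∩ line v y).Nonempty) :
    min p ((A ∩ line v x).ncard + (B ∩ line v y).ncard - 1) ≤
      ((A + B) ∩ line v (x + y)).ncard := by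
  have hsub : (fun z => z i) '' (A ∩ line v x) + (fun z => z i) '' (B ∩ line v y) ⊆
      (fun z => z i) '' ((A + B) ∩ line v (x + y)) := by
    rintro _ ⟨_, ⟨z, hz, rfl⟩, _, ⟨w, hw, rfl⟩, rfl⟩
    exact ⟨z + w, inter_line_add_inter_line_subset A B x y (Set.add_mem_add hz hw), rfl⟩
  calc min p ((A ∩ line v x).ncard + (B ∩ line v y).ncard - 1)
      = min p (((fun z => z i) '' (A ∩ line v x)).ncard +
          ((fun z => z i) '' (B ∩ line v y)).ncard - 1) := by
        rw [ncard_image_apply_inter_line hvi, ncard_image_apply_inter_line hvi]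
    _ ≤ ((fun z => z i) '' (A ∩ line v x) + (fun z => z i) '' (B ∩ line v y)).ncard :=
        ZMod.min_le_ncard_add Fact.out (hA.image _) (hB.image _)
    _ ≤ ((fun z => z i) '' ((A + B) ∩ line v (x + y))).ncard := Set.ncard_le_ncard hsub
    _ = ((A + B) ∩ line v (x + y)).ncard := ncard_image_apply_inter_line hvi _ _

end Lines

def IsLeadingIndex {n p : ℕ} (v : Fin n → ZMod p) (i : Fin n) : Prop :=
  v i ≠ 0 ∧ ∀ j, i < j → v j = 0

lemma exists_isLeadingIndex {n p : ℕ} {v : Fin n → ZMod p} (hv : v ≠ 0) :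
    ∃ i, IsLeadingIndex v i := by
  classical
  have hsupp : (Finset.univ.filter fun j => v j ≠ 0).Nonempty := by
    obtain ⟨j, hj⟩ := Function.ne_iff.mp hv
    exact ⟨j, by simpa using hj⟩
  refine ⟨_, (Finset.mem_filter.mp (Finset.max'_mem _ hsupp)).2, fun j hj => ?_⟩
  by_contra hvj
  exact (Finset.le_max' _ j (by simpa using hvj)).not_gt hj

namespace IsLeadingIndex

variable {n p : ℕ} [Fact p.Prime] {v : Fin n → ZMod p} {i : Fin n} (hi : IsLeadingIndex v i)
include hi

lemma lexLt_iff {u z x : Fin n → ZMod p} (hz : z ∈ line v u) (hx : x ∈ line v u) :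
    lexLt z x ↔ (z i).val < (x i).val := by
  refine ⟨fun ⟨j, hlt, heq⟩ => ?_,
    fun h => ⟨i, h, fun j hj => apply_eq_of_mem_line (hi.2 j hj) hz hx⟩⟩
  rcases lt_trichotomy j i with hji | rfl | hij
  · rw [injOn_apply_line hi.1 u hz hx (heq i hji)] at hlt
    exact absurd hlt (lt_irrefl _)
  · exact hlt
  · rw [apply_eq_of_mem_line (hi.2 j hij) hz hx] at hlt
    exact absurd hlt (lt_irrefl _)

lemma ncard_lexLt {u x : Fin n → ZMod p} (hx : x ∈ line v u) :
    {z | z ∈ line v u ∧ lexLt z x}.ncard = (x i).val := by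
  have : NeZero p := ⟨(Fact.out : p.Prime).ne_zero⟩
  have hset : {z | z ∈ line v u ∧ lexLt z x} =
      line v u ∩ (fun z => z i) ⁻¹' {c | c.val < (x i).val} := by
    ext z
    exact and_congr_right fun hz => hi.lexLt_iff hz hx
  rw [hset, ← ((injOn_apply_line hi.1 u).mono Set.inter_subset_left).ncard_image,
    Set.image_inter_preimage, image_apply_line hi.1, Set.univ_inter,
    ZMod.ncard_val_lt (x i).val_lt.le]

lemma mem_comp_iff {A : Set (Fin n → ZMod p)} {x : Fin n → ZMod p} :
    x ∈ comp v A ↔ (x i).val < (A ∩ line v x).ncard := by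
  simp only [comp, IS, Set.mem_iUnion, Set.mem_ofPred_eq]
  refine ⟨fun ⟨u, hx, hlt⟩ => ?_, fun h => ⟨x, mem_line_self x, ?_⟩⟩
  · rwa [line_eq_of_mem hx, hi.ncard_lexLt (mem_line_self x)] at hlt
  · rwa [hi.ncard_lexLt (mem_line_self x)]

end IsLeadingIndex

theorem statement4_general (p n : ℕ) (hp : p.Prime)
    (A B : Set (Fin n → ZMod p)) (v : Fin n → ZMod p) (hv : v ≠ 0) :
    comp v A + comp v B ⊆ comp v (A + B) := by
  have : Fact p.Prime := ⟨hp⟩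
  obtain ⟨i, hi⟩ := exists_isLeadingIndex hv
  refine Set.add_subset_iff.mpr fun x hx y hy => ?_
  rw [hi.mem_comp_iff] at hx hy ⊢
  have hCD := min_le_ncard_add_inter_line hi.1
    (Set.nonempty_of_ncard_ne_zero (Nat.zero_lt_of_lt hx).ne')
    (Set.nonempty_of_ncard_ne_zero (Nat.zero_lt_of_lt hy).ne')
  have hsum : ((x + y) i).val ≤ (x i).val + (y i).val := ZMod.val_add_le _ _
  have hlt : ((x + y) i).val < p := ZMod.val_lt _
  omega

theorem statement4 (p n : ℕ) (hp : p.Prime) (hn : 1 ≤ n)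
    (A B : Set (Fin n → ZMod p)) (v : Fin n → ZMod p) (hv : v ≠ 0) :
    comp v A + comp v B ⊆ comp v (A + B) :=
  statement4_general p n hp A B v hv
end

section
/- Let p ≥ 3 be a prime, let q be an integer with 1 ≤ q ≤ p−1, let S, T be positive reals, and let m ≥ 10 be a real number such that T ≤ (m+q)·S/p^m. Then T + (S/p^m)·(q − ((m−3)·q + 2·min(2q, p−1))·log p) < 0, where log denotes the natural logarithm. Consequently, the function m ↦ (2·min(2q, p−1) + (m−3)q)·S/(2p^m) + (m+1)·T/2 is strictly decreasing at such points m. -/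
/-!
With `c = log p`, the choice `T ≤ (m + q) S / p^m` reduces the first claim to
`m + 2q < ((m - 3) q + 2 min(2q, p - 1)) c`. Since `min(2q, p - 1) ≥ 2` and `(m - 3) c ≥ 2`, the
right side minus `2q` is at least `(m + 1) c - 2`, which exceeds `m` as soon as `11 c > 12`, and
`log 3 > 12/11`. The derivative of the function in `m` is half the left side of the first claim.
-/

open Real

lemma add_two_mul_lt_mul_of_twelve_div_eleven_lt {q M c m : ℝ} (hq : 1 ≤ q) (hM : 2 ≤ M)
    (hc : 12 / 11 < c) (hm : 10 ≤ m) : m + 2 * q < ((m - 3) * q + 2 * M) * c := by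
  have hfactor : (m - 3) * c - 2 ≤ q * ((m - 3) * c - 2) :=
    le_mul_of_one_le_left (by nlinarith) hq
  nlinarith

lemma add_div_mul_sub_neg_of_le {S T P m q A : ℝ} (hS : 0 < S) (hP : 0 < P)
    (hTm : T ≤ (m + q) * S / P) (hA : m + 2 * q < A) : T + S / P * (q - A) < 0 := by
  have hneg : S / P * (m + 2 * q - A) < 0 := mul_neg_of_pos_of_neg (by positivity) (by linarith)
  have hsplit : (m + q) * S / P + S / P * (q - A) = S / P * (m + 2 * q - A) := by ring
  linarith

lemma hasDerivAt_mul_div_rpow_add {p : ℝ} (hp : 0 < p) (a q S T m : ℝ) :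
    HasDerivAt (fun x : ℝ => (a + (x - 3) * q) * S / (2 * p ^ x) + (x + 1) * T / 2)
      ((T + S / p ^ m * (q - ((m - 3) * q + a) * log p)) / 2) m := by
  have hpow : HasDerivAt (fun x : ℝ => 2 * p ^ x) (2 * (p ^ m * log p)) m :=
    (hasStrictDerivAt_const_rpow hp m).hasDerivAt.const_mul 2
  have hnum : HasDerivAt (fun x : ℝ => (a + (x - 3) * q) * S) (1 * q * S) m :=
    (((hasDerivAt_id m).sub_const 3).mul_const q).const_add a |>.mul_const S
  have hlin : HasDerivAt (fun x : ℝ => (x + 1) * T / 2) (1 * T / 2) m :=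
    (((hasDerivAt_id m).add_const 1).mul_const T).div_const 2
  have hpm : 0 < p ^ m := rpow_pos_of_pos hp m
  refine ((hnum.div hpow (by positivity)).add hlin).congr_deriv ?_
  field_simp
  ring

theorem statement14_general (p q : ℕ) (hp3 : 3 ≤ p)
    (hq1 : 1 ≤ q)
    (S T : ℝ) (hS : 0 < S) (m : ℝ) (hm : 10 ≤ m)
    (hTm : T ≤ (m + q) * S / (p : ℝ) ^ m) :
    T + S / (p : ℝ) ^ m *
        (q - ((m - 3) * q + 2 * ((min (2 * q) (p - 1) : ℕ) : ℝ)) * Real.log p) < 0 ∧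
      deriv (fun x : ℝ =>
        (2 * ((min (2 * q) (p - 1) : ℕ) : ℝ) + (x - 3) * q) * S / (2 * (p : ℝ) ^ x) +
          (x + 1) * T / 2) m < 0 := by
  have hp : (3 : ℝ) ≤ p := by exact_mod_cast hp3
  have hlog : 12 / 11 < log p :=
    lt_of_lt_of_le (by linarith [log_three_gt_d9]) (log_le_log (by norm_num) hp)
  have hmin : (2 : ℝ) ≤ ((min (2 * q) (p - 1) : ℕ) : ℝ) := by
    exact_mod_cast le_min (by omega) (by omega)
  have hfirst := add_div_mul_sub_neg_of_le hS (rpow_pos_of_pos (by linarith) m) hTm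
    (add_two_mul_lt_mul_of_twelve_div_eleven_lt (by exact_mod_cast hq1) hmin hlog hm)
  refine ⟨hfirst, ?_⟩
  rw [(hasDerivAt_mul_div_rpow_add (by linarith) _ _ S T m).deriv]
  linarith

theorem statement14 (p q : ℕ) (hp : p.Prime) (hp3 : 3 ≤ p)
    (hq1 : 1 ≤ q) (hq2 : q ≤ p - 1)
    (S T : ℝ) (hS : 0 < S) (hT : 0 < T) (m : ℝ) (hm : 10 ≤ m)
    (hTm : T ≤ (m + q) * S / (p : ℝ) ^ m) :
    T + S / (p : ℝ) ^ m *
        (q - ((m - 3) * q + 2 * ((min (2 * q) (p - 1) : ℕ) : ℝ)) * Real.log p) < 0 ∧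
      deriv (fun x : ℝ =>
        (2 * ((min (2 * q) (p - 1) : ℕ) : ℝ) + (x - 3) * q) * S / (2 * (p : ℝ) ^ x) +
          (x + 1) * T / 2) m < 0 :=
  statement14_general p q hp3 hq1 S T hS m hm hTm
end

section
/- Let p ≥ 3 be an integer, let q be an integer with 2 ≤ q ≤ p−1, and set g(q) = q² + 3q − 2·min(2q, p−1). Then for every real x ≥ 5/2, p^(x − q + √(x² + g(q))) / (x + √(x² + g(q))) ≤ p^(2x − 1) / (2x). -/
/-!
Write `s = √(x² + g)`. Since `q ≤ min (2q) (p - 1) ≤ 2q`, the constant satisfies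
`0 ≤ q² - q ≤ g ≤ q² + q`, which forces `x ≤ s ≤ x + (q - 1)` once `x ≥ 5/2` and `q ≥ 2`.
Hence the exponent `x - q + s` is at most `2x - 1` and the denominator `x + s` is at least `2x`,
and the inequality follows from monotonicity of `t ↦ p ^ t` for `p ≥ 1`.
-/

lemma cast_min_two_mul_mem_Icc {q n : ℕ} (h : q ≤ n) :
    ((min (2 * q) n : ℕ) : ℝ) ∈ Set.Icc (q : ℝ) (2 * q) := by
  constructor
  · exact_mod_cast le_min (by omega) h
  · exact_mod_cast min_le_left (2 * q) n

lemma le_sqrt_sq_add {x g : ℝ} (hg : 0 ≤ g) : x ≤ √(x ^ 2 + g) :=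
  (le_abs_self x).trans (Real.abs_le_sqrt (by linarith))

lemma sqrt_sq_add_le {x g c : ℝ} (hxc : 0 ≤ x + c) (hg : g ≤ 2 * c * x + c ^ 2) :
    √(x ^ 2 + g) ≤ x + c :=
  Real.sqrt_le_iff.mpr ⟨hxc, by nlinarith⟩

theorem statement16_general (p q : ℕ) (hq1 : 2 ≤ q) (hq2 : q ≤ p - 1)
    (g : ℝ) (hg : g = (q : ℝ) ^ 2 + 3 * q - 2 * ((min (2 * q) (p - 1) : ℕ) : ℝ))
    (x : ℝ) (hx : 5 / 2 ≤ x) :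
    (p : ℝ) ^ (x - q + Real.sqrt (x ^ 2 + g)) / (x + Real.sqrt (x ^ 2 + g)) ≤
      (p : ℝ) ^ (2 * x - 1) / (2 * x) := by
  have hq : (2 : ℝ) ≤ q := by exact_mod_cast hq1
  have hp : (1 : ℝ) ≤ p := by exact_mod_cast (by omega : 1 ≤ p)
  obtain ⟨hmin_ge, hmin_le⟩ := cast_min_two_mul_mem_Icc hq2
  have hg_nonneg : 0 ≤ g := by rw [hg]; nlinarith
  have hg_le : g ≤ 2 * (q - 1) * x + (q - 1) ^ 2 := by rw [hg]; nlinarith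
  have hs_ge : x ≤ √(x ^ 2 + g) := le_sqrt_sq_add hg_nonneg
  have hs_le : √(x ^ 2 + g) ≤ x + (q - 1) := sqrt_sq_add_le (by linarith) hg_le
  exact div_le_div₀ (Real.rpow_nonneg (by linarith) _)
    (Real.rpow_le_rpow_of_exponent_le hp (by linarith)) (by linarith) (by linarith)

theorem statement16 (p q : ℕ) (hp : 3 ≤ p) (hq1 : 2 ≤ q) (hq2 : q ≤ p - 1)
    (g : ℝ) (hg : g = (q : ℝ) ^ 2 + 3 * q - 2 * ((min (2 * q) (p - 1) : ℕ) : ℝ))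
    (x : ℝ) (hx : 5 / 2 ≤ x) :
    (p : ℝ) ^ (x - q + Real.sqrt (x ^ 2 + g)) / (x + Real.sqrt (x ^ 2 + g)) ≤
      (p : ℝ) ^ (2 * x - 1) / (2 * x) :=
  statement16_general p q hq1 hq2 g hg x hx
end

section
/- Let A = {0, e₁, 2e₁, e₂} ⊆ (ZMod 3)², where e₁, e₂ is the standard basis. Then |A| = 4, |A + A| = 7 (so the doubling constant of A is K = 7/4), and the affine span of A is all of (ZMod 3)², of size 9; moreover 9/4 > 3^(2K−2)/(2K−1) for K = 7/4. -/
/-! A coset containing `0` is a subgroup, so when `0 ∈ A` the affine span contains the subgroup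
generated by `A`; here `A` contains `0`, `e₁`, `e₂`, so its span is everything. The cardinalities
are finite computations, and the inequality is `3 ^ (3/2) = 3√3 < 45/8 = (9/4) (5/2)`. -/

open Pointwise

theorem AddSubgroup.closure_subset_affSpan_of_zero_mem {G : Type*} [AddCommGroup G] {A : Set G}
    (h0 : (0 : G) ∈ A) :
    (AddSubgroup.closure A : Set G) ⊆ affSpan A := by
  rintro x hx C ⟨hAC, H, g, rfl⟩
  obtain ⟨h, hh, hgh⟩ := hAC h0
  have hg : g ∈ H := by
    rw [eq_neg_of_add_eq_zero_left hgh]; exact neg_mem hh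
  rw [leftAddCoset_mem_leftAddCoset H hg] at hAC ⊢
  exact (AddSubgroup.closure_le H).mpr hAC hx

theorem AddSubgroup.closure_range_single_one {ι : Type*} [Fintype ι] [DecidableEq ι] (m : ℕ) :
    AddSubgroup.closure (Set.range fun i : ι => (Pi.single i 1 : ι → ZMod m)) = ⊤ := by
  refine eq_top_iff.mpr fun x _ => ?_
  rw [← Finset.univ_sum_single x]
  refine sum_mem fun i _ => ?_
  have : Pi.single i (x i) = ((x i).cast : ℤ) • (Pi.single i 1 : ι → ZMod m) := by
    rw [← Pi.single_smul, zsmul_eq_mul, mul_one, ZMod.intCast_zmod_cast]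
  rw [this]
  exact zsmul_mem (AddSubgroup.subset_closure (Set.mem_range_self i)) _

theorem three_rpow_three_halves_lt : (3 : ℝ) ^ (3 / 2 : ℝ) < 45 / 8 := by
  have hsq : ((3 : ℝ) ^ (3 / 2 : ℝ)) ^ 2 = 27 := by
    rw [← Real.rpow_natCast, ← Real.rpow_mul (by norm_num)]; norm_num
  nlinarith [Real.rpow_nonneg (by norm_num : (0:ℝ) ≤ 3) (3 / 2)]

theorem statement19 (A : Set (Fin 2 → ZMod 3))
    (hA : A = {0, (Pi.single 0 1 : Fin 2 → ZMod 3), (Pi.single 0 2 : Fin 2 → ZMod 3),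
      (Pi.single 1 1 : Fin 2 → ZMod 3)}) :
    A.ncard = 4 ∧
    (A + A).ncard = 7 ∧
    affSpan A = Set.univ ∧
    (affSpan A).ncard = 9 ∧
    (3 : ℝ) ^ (2 * (7 / 4 : ℝ) - 2) / (2 * (7 / 4 : ℝ) - 1) < 9 / 4 := by
  have hAfin : A = ↑({0, Pi.single 0 1, Pi.single 0 2, Pi.single 1 1} :
      Finset (Fin 2 → ZMod 3)) := by
    simp [hA]
  have hspan : affSpan A = Set.univ := by
    refine Set.eq_univ_of_univ_subset <|
      le_trans ?_ (AddSubgroup.closure_subset_affSpan_of_zero_mem (by simp [hA]))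
    rw [← AddSubgroup.coe_top, ← AddSubgroup.closure_range_single_one 3]
    refine AddSubgroup.closure_mono ?_
    rintro _ ⟨i, rfl⟩
    fin_cases i <;> simp [hA]
  refine ⟨?_, ?_, hspan, ?_, ?_⟩
  · rw [hAfin, Set.ncard_coe_finset]; decide
  · rw [hAfin, ← Finset.coe_add, Set.ncard_coe_finset]; decide
  · rw [hspan, Set.ncard_univ, Nat.card_eq_fintype_card]; rfl
  · rw [div_lt_iff₀ (by norm_num)]
    norm_num
    linarith [three_rpow_three_halves_lt]
end
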